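/- Pinsker's inequality for finite sample spaces: for any two probability distributions p, q on a finite sample space Ω and any event A ⊆ Ω, 2(p(A) − q(A))² ≤ KL(p, q). -/

import Mathlib

/-!
Merging the outcomes inside `A` and inside `Aᶜ` can only decrease relative entropy (the log-sum
inequality, i.e. `log x ≤ x - 1` applied termwise), so it suffices to prove the Bernoulli case
`2 (a - b)² ≤ a log (a / b) + (1 - a) log ((1 - a) / (1 - b))`. For fixed `a`, the difference of
the two sides, as a function of `b`, has derivative `(b - a) (1 / (b (1 - b)) - 4)`, which has the
sign of `b - a` because `b (1 - b) ≤ 1 / 4`; hence it is minimal, namely `0`, at `b = a`.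
-/

open Real Finset Set

lemma sum_pos_of_sum_pos {ι : Type*} {s : Finset ι} {p q : ι → ℝ}
    (hq : ∀ i ∈ s, 0 ≤ q i) (habs : ∀ i ∈ s, 0 < p i → 0 < q i)
    (hp : 0 < ∑ i ∈ s, p i) : 0 < ∑ i ∈ s, q i := by
  obtain ⟨i, hi, hpi⟩ := exists_lt_of_sum_lt (f := 0) (g := p) (by simpa using hp)
  exact sum_pos' hq ⟨i, hi, habs i hi hpi⟩

lemma mul_log_add_sub_mul_le_mul_log_div {p q r : ℝ} (hp : 0 ≤ p) (hq : 0 ≤ q)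
    (hpq : 0 < p → 0 < q) (hr : 0 < r) :
    p * log r + p - q * r ≤ p * log (p / q) := by
  rcases hp.eq_or_lt with rfl | hp
  · simpa using mul_nonneg hq hr.le
  have hq := hpq hp
  have hlog := log_le_sub_one_of_pos (show 0 < r / (p / q) by positivity)
  rw [log_div hr.ne' (by positivity)] at hlog
  calc p * log r + p - q * r = p * (log r - (r / (p / q) - 1)) := by field_simp; ring
    _ ≤ p * log (p / q) := by gcongr; linarith

/-- The log-sum inequality. -/
theorem sum_mul_log_div_sum_le {ι : Type*} (s : Finset ι) {p q : ι → ℝ}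
    (hp : ∀ i ∈ s, 0 ≤ p i) (hq : ∀ i ∈ s, 0 ≤ q i)
    (habs : ∀ i ∈ s, 0 < p i → 0 < q i) :
    (∑ i ∈ s, p i) * log ((∑ i ∈ s, p i) / ∑ i ∈ s, q i) ≤
      ∑ i ∈ s, p i * log (p i / q i) := by
  set a := ∑ i ∈ s, p i
  set b := ∑ i ∈ s, q i
  rcases (sum_nonneg hp).eq_or_lt with ha | ha
  · have hp0 : ∀ i ∈ s, p i = 0 := (sum_eq_zero_iff_of_nonneg hp).1 ha.symm
    rw [show a = 0 from ha.symm, zero_mul, sum_eq_zero fun i hi => by rw [hp0 i hi, zero_mul]]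
  have hb : 0 < b := sum_pos_of_sum_pos hq habs ha
  calc a * log (a / b) = ∑ i ∈ s, (p i * log (a / b) + p i - q i * (a / b)) := by
        rw [sum_sub_distrib, sum_add_distrib, ← sum_mul, ← sum_mul, mul_div_cancel₀ _ hb.ne']
        ring
    _ ≤ ∑ i ∈ s, p i * log (p i / q i) :=
        sum_le_sum fun i hi =>
          mul_log_add_sub_mul_le_mul_log_div (hp i hi) (hq i hi) (habs i hi) (by positivity)

/-- For `0 < b < 1`, `pinskerPotential a b - pinskerPotential a a` is the binary relative entropy
`a log (a / b) + (1 - a) log ((1 - a) / (1 - b))` minus `2 (a - b) ^ 2`. -/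
noncomputable def pinskerPotential (a t : ℝ) : ℝ :=
  -a * log t - (1 - a) * log (1 - t) - 2 * (a - t) ^ 2

lemma pinskerPotential_one_sub (a t : ℝ) :
    pinskerPotential (1 - a) (1 - t) = pinskerPotential a t := by
  simp only [pinskerPotential, sub_sub_cancel]
  ring

lemma hasDerivAt_pinskerPotential (a : ℝ) {t : ℝ} (ht0 : 0 < t) (ht1 : t < 1) :
    HasDerivAt (pinskerPotential a) ((t - a) * (1 / (t * (1 - t)) - 4)) t := by
  have h1t : 1 - t ≠ 0 := (sub_pos.2 ht1).ne'
  have hlog_one_sub : HasDerivAt (fun t => log (1 - t)) (-1 / (1 - t)) t := by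
    simpa using ((hasDerivAt_id t).const_sub 1).log h1t
  have hsq : HasDerivAt (fun t => (a - t) ^ 2) (-(2 * (a - t))) t := by
    simpa using ((hasDerivAt_id t).const_sub a).fun_pow 2
  refine ((((hasDerivAt_log ht0.ne').const_mul (-a)).fun_sub
    (hlog_one_sub.const_mul (1 - a))).fun_sub (hsq.const_mul 2)).congr_deriv ?_
  field_simp
  ring

lemma monotoneOn_pinskerPotential {a b : ℝ} (ha : 0 ≤ a) (hb : b < 1) :
    MonotoneOn (pinskerPotential a) (Icc a b) := by
  have hIoo : Ioo a b ⊆ Ioo 0 1 := fun t ht => ⟨ha.trans_lt ht.1, ht.2.trans hb⟩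
  have hcont_log : ContinuousOn (fun t => -a * log t) (Icc a b) := by
    rcases ha.eq_or_lt with rfl | ha
    · simpa using continuousOn_const
    · exact continuousOn_const.mul (continuousOn_log.mono fun t ht => (ha.trans_le ht.1).ne')
  have hcont_log_one_sub : ContinuousOn (fun t => log (1 - t)) (Icc a b) :=
    ContinuousOn.log (by fun_prop) fun t ht => by linarith [ht.2]
  refine monotoneOn_of_deriv_nonneg (convex_Icc a b) ?_ ?_ ?_
  · exact (hcont_log.sub (continuousOn_const.mul hcont_log_one_sub)).sub (by fun_prop)
  · rw [interior_Icc]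
    intro t ht
    obtain ⟨ht0, ht1⟩ := hIoo ht
    exact (hasDerivAt_pinskerPotential a ht0 ht1).differentiableAt.differentiableWithinAt
  · rw [interior_Icc]
    intro t ht
    obtain ⟨ht0, ht1⟩ := hIoo ht
    rw [(hasDerivAt_pinskerPotential a ht0 ht1).deriv]
    have hquarter : t * (1 - t) ≤ 1 / 4 := by nlinarith [sq_nonneg (1 - 2 * t)]
    have h4 : 4 ≤ 1 / (t * (1 - t)) := by
      rw [le_div_iff₀ (by nlinarith)]; linarith
    exact mul_nonneg (by linarith [ht.1]) (by linarith)

lemma pinskerPotential_self_le {a b : ℝ} (ha0 : 0 ≤ a) (ha1 : a ≤ 1) (hb0 : 0 < b)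
    (hb1 : b < 1) :
    pinskerPotential a a ≤ pinskerPotential a b := by
  rcases le_total a b with hab | hba
  · exact monotoneOn_pinskerPotential ha0 hb1 (left_mem_Icc.2 hab) (right_mem_Icc.2 hab) hab
  · rw [← pinskerPotential_one_sub a a, ← pinskerPotential_one_sub a b]
    have hba' : 1 - a ≤ 1 - b := by linarith
    exact monotoneOn_pinskerPotential (by linarith) (by linarith)
      (left_mem_Icc.2 hba') (right_mem_Icc.2 hba') hba'

theorem two_mul_sq_le_binary_relEntropy {a b : ℝ} (ha0 : 0 ≤ a) (ha1 : a ≤ 1)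
    (hb0 : 0 ≤ b) (hb1 : b ≤ 1) (hab0 : 0 < a → 0 < b) (hab1 : a < 1 → b < 1) :
    2 * (a - b) ^ 2 ≤ a * log (a / b) + (1 - a) * log ((1 - a) / (1 - b)) := by
  rcases hb0.eq_or_lt with rfl | hb0
  · obtain rfl : a = 0 := by by_contra h; exact (hab0 (ha0.lt_of_ne' h)).false
    simp
  rcases hb1.eq_or_lt with rfl | hb1
  · obtain rfl : a = 1 := by by_contra h; exact (hab1 (ha1.lt_of_ne h)).false
    simp
  have hmul_log_div : ∀ x y : ℝ, y ≠ 0 → x * log (x / y) = x * log x - x * log y := by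
    intro x y hy
    rcases eq_or_ne x 0 with rfl | hx
    · simp
    · rw [log_div hx hy]; ring
  have h := pinskerPotential_self_le ha0 ha1 hb0 hb1
  rw [hmul_log_div a b hb0.ne', hmul_log_div (1 - a) (1 - b) (by linarith)]
  simp only [pinskerPotential, sub_self] at h
  nlinarith

/-- Pinsker's inequality on a finite sample space: for probability mass functions
    p, q on a finite Ω (with q positive wherever p is) and any event A ⊆ Ω,
    2(p(A) − q(A))² ≤ KL(p, q) = ∑ₓ p(x) ln(p(x)/q(x)). -/
theorem stmt_2 {Ω : Type*} [Fintype Ω]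
    (p q : Ω → ℝ)
    (hp0 : ∀ x, 0 ≤ p x) (hq0 : ∀ x, 0 ≤ q x)
    (hp1 : ∑ x, p x = 1) (hq1 : ∑ x, q x = 1)
    (habs : ∀ x, 0 < p x → 0 < q x)
    (A : Finset Ω) :
    2 * (∑ x ∈ A, p x - ∑ x ∈ A, q x) ^ 2 ≤ ∑ x, p x * Real.log (p x / q x) := by
  classical
  set a := ∑ x ∈ A, p x
  set b := ∑ x ∈ A, q x
  have hpAc : ∑ x ∈ Aᶜ, p x = 1 - a := by
    rw [← hp1, ← sum_add_sum_compl A p, add_sub_cancel_left]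
  have hqAc : ∑ x ∈ Aᶜ, q x = 1 - b := by
    rw [← hq1, ← sum_add_sum_compl A q, add_sub_cancel_left]
  have hpAc_nonneg : 0 ≤ ∑ x ∈ Aᶜ, p x := sum_nonneg fun x _ => hp0 x
  have hqAc_nonneg : 0 ≤ ∑ x ∈ Aᶜ, q x := sum_nonneg fun x _ => hq0 x
  have hcoarse : a * log (a / b) + (1 - a) * log ((1 - a) / (1 - b)) ≤
      ∑ x, p x * log (p x / q x) := by
    rw [← sum_add_sum_compl A, ← hpAc, ← hqAc]
    exact add_le_add
      (sum_mul_log_div_sum_le A (fun x _ => hp0 x) (fun x _ => hq0 x) fun x _ => habs x)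
      (sum_mul_log_div_sum_le Aᶜ (fun x _ => hp0 x) (fun x _ => hq0 x) fun x _ => habs x)
  refine (two_mul_sq_le_binary_relEntropy ?_ ?_ ?_ ?_ ?_ ?_).trans hcoarse
  · exact sum_nonneg fun x _ => hp0 x
  · linarith
  · exact sum_nonneg fun x _ => hq0 x
  · linarith
  · exact sum_pos_of_sum_pos (fun x _ => hq0 x) fun x _ => habs x
  · intro ha
    have := sum_pos_of_sum_pos (s := Aᶜ) (fun x _ => hq0 x) (fun x _ => habs x) (by linarith)
    linarith
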